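/- Let V be a countable type with a metric d, and let μ, ν be finitely supported probability mass functions on V. Set Ω := supp(μ) ∪ supp(ν) (a finite set). Then W(μ,ν) = sup { ∑_{z ∈ Ω} g(z)·(μ(z) − ν(z)) : g : Ω → ℝ with |g(a) − g(b)| ≤ d(a,b) for all a, b ∈ Ω }; that is, in the Kantorovich dual problem it suffices to optimize over 1-Lipschitz functions defined only on the union of the supports. -/

import Mathlib

open scoped ENNReal

variable {V : Type*}

/-- `d` is a metric on `V`. -/
def IsMetric (d : V → V → ℝ) : Prop :=
  (∀ a b, d a b = d b a) ∧ (∀ a b, d a b = 0 ↔ a = b) ∧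
  (∀ a b c, d a c ≤ d a b + d b c)

/-- `q` is a coupling of the probability mass functions `μ` and `ν`. -/
def IsCoupling (μ ν : V → ℝ≥0∞) (q : V × V → ℝ≥0∞) : Prop :=
  (∀ a, ∑' b, q (a, b) = μ a) ∧ (∀ b, ∑' a, q (a, b) = ν b)

/-- The L¹-Wasserstein distance, computed in `[0,∞]`. -/
noncomputable def Wass (d : V → V → ℝ) (μ ν : V → ℝ≥0∞) : ℝ≥0∞ :=
  ⨅ q : {q : V × V → ℝ≥0∞ // IsCoupling μ ν q},
    ∑' p : V × V, ENNReal.ofReal (d p.1 p.2) * q.1 p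

/-- `μ` is a probability mass function on `V`. -/
def IsPMF (μ : V → ℝ≥0∞) : Prop := ∑' z, μ z = 1

/-!
Everything lives on the finite set `F = supp μ ∪ supp ν`: a coupling vanishes off `F × F`, so
`W(μ, ν)` is the value of a finite transport linear program. Weak duality is
`∑ g (μ - ν) = ∑ (g a - g b) q(a, b) ≤ ∑ d q`. Conversely, if `t < W(μ, ν)` then `(μ, ν, t)` lies
outside the compact convex set of (marginals, cost) of probability vectors on `F × F`. A separating
functional yields potentials with `φ a + ψ b ≤ d a b` and `∑ μ φ + ∑ ν ψ > t`, and the c-transform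
`g x = min_b (d x b - ψ b)` is `1`-Lipschitz with `φ ≤ g ≤ -ψ`.
-/

open Function Finset

lemma IsMetric.apply_self {d : V → V → ℝ} (hd : IsMetric d) (a : V) : d a a = 0 :=
  (hd.2.1 a a).2 rfl

lemma IsMetric.comp {W : Type*} {d : V → V → ℝ} (hd : IsMetric d) {f : W → V}
    (hf : Injective f) : IsMetric fun a b => d (f a) (f b) :=
  ⟨fun _ _ => hd.1 _ _, fun _ _ => (hd.2.1 _ _).trans hf.eq_iff, fun _ _ _ => hd.2.2 _ _ _⟩

lemma IsMetric.nonneg {d : V → V → ℝ} (hd : IsMetric d) (a b : V) : 0 ≤ d a b := by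
  have := hd.2.2 a b a
  rw [hd.apply_self, hd.1 b a] at this
  linarith

section FiniteTransport

variable {ι : Type*} [Fintype ι] {d : ι → ι → ℝ} {m n : ι → ℝ}

def IsTransportPlan (m n : ι → ℝ) (q : ι × ι → ℝ) : Prop :=
  (∀ p, 0 ≤ q p) ∧ (∀ a, ∑ b, q (a, b) = m a) ∧ ∀ b, ∑ a, q (a, b) = n b

def transportCost (d : ι → ι → ℝ) (q : ι × ι → ℝ) : ℝ :=
  ∑ p, d p.1 p.2 * q p

lemma isTransportPlan_mul (hm : ∀ a, 0 ≤ m a) (hn : ∀ b, 0 ≤ n b) (hm1 : ∑ a, m a = 1)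
    (hn1 : ∑ b, n b = 1) : IsTransportPlan m n fun p => m p.1 * n p.2 :=
  ⟨fun p => mul_nonneg (hm _) (hn _), fun a => by simp only [← mul_sum, hn1, mul_one],
    fun b => by simp only [← sum_mul, hm1, one_mul]⟩

lemma IsTransportPlan.transportCost_nonneg {q : ι × ι → ℝ} (hq : IsTransportPlan m n q)
    (hd : ∀ a b, 0 ≤ d a b) : 0 ≤ transportCost d q :=
  sum_nonneg fun p _ => mul_nonneg (hd _ _) (hq.1 p)

lemma sum_mul_sub_eq_sum_mul_add_sum_mul_neg (g : ι → ℝ) :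
    ∑ a, g a * (m a - n a) = ∑ a, m a * g a + ∑ b, n b * -g b := by
  simp only [mul_neg, sum_neg_distrib, ← sub_eq_add_neg, ← sum_sub_distrib]
  exact sum_congr rfl fun a _ => by ring

lemma sum_marginals_mul_add_mul_transportCost (q : ι × ι → ℝ) (f g : ι → ℝ) (s : ℝ) :
    ∑ a, (∑ b, q (a, b)) * f a + ∑ b, (∑ a, q (a, b)) * g b + s * transportCost d q =
      ∑ p, q p * (f p.1 + g p.2 + s * d p.1 p.2) := by
  simp only [transportCost, Fintype.sum_prod_type, mul_add, sum_add_distrib, sum_mul, mul_sum]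
  rw [sum_comm (f := fun a b => q (a, b) * g b)]
  congr 1
  exact sum_congr rfl fun a _ => sum_congr rfl fun b _ => by ring

lemma IsTransportPlan.sum_mul_sub_le_transportCost {q : ι × ι → ℝ} (hq : IsTransportPlan m n q)
    {g : ι → ℝ} (hg : ∀ a b, |g a - g b| ≤ d a b) :
    ∑ a, g a * (m a - n a) ≤ transportCost d q := by
  have key := sum_marginals_mul_add_mul_transportCost (d := d) q g (fun b => -g b) 0
  simp only [hq.2.1, hq.2.2, zero_mul, add_zero] at key
  calc ∑ a, g a * (m a - n a) = ∑ p, q p * (g p.1 + -g p.2) := by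
        rw [sum_mul_sub_eq_sum_mul_add_sum_mul_neg, key]
    _ ≤ transportCost d q := sum_le_sum fun p _ => by
        rw [mul_comm]
        exact mul_le_mul_of_nonneg_right (by linarith [(le_abs_self _).trans (hg p.1 p.2)]) (hq.1 p)

lemma IsTransportPlan.mem_stdSimplex {q : ι × ι → ℝ} (hq : IsTransportPlan m n q)
    (hm1 : ∑ a, m a = 1) : q ∈ stdSimplex ℝ (ι × ι) :=
  ⟨hq.1, by rw [Fintype.sum_prod_type]; simp only [hq.2.1, hm1]⟩

lemma exists_lipschitz_of_potentials (hd : IsMetric d) {φ ψ : ι → ℝ}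
    (h : ∀ a b, φ a + ψ b ≤ d a b) :
    ∃ g : ι → ℝ, (∀ a b, |g a - g b| ≤ d a b) ∧ (∀ a, φ a ≤ g a) ∧ ∀ b, g b ≤ -ψ b := by
  rcases isEmpty_or_nonempty ι with _ | _
  · exact ⟨0, isEmptyElim, isEmptyElim, isEmptyElim⟩
  set g : ι → ℝ := fun x => univ.inf' univ_nonempty fun b => d x b - ψ b
  have hg_le : ∀ x b, g x ≤ d x b - ψ b := fun x b => inf'_le _ (mem_univ b)
  have hg_sub : ∀ x y, g x ≤ d x y + g y := by
    intro x y
    obtain ⟨b, -, hb⟩ := exists_mem_eq_inf' univ_nonempty fun b => d y b - ψ b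
    have := hd.2.2 x y b
    linarith [hg_le x b, show g y = _ from hb]
  refine ⟨g, fun a b => abs_sub_le_iff.2 ⟨?_, ?_⟩, fun a => le_inf' _ _ fun b _ => ?_, fun b => ?_⟩
  · linarith [hg_sub a b]
  · linarith [hg_sub b a, hd.1 a b]
  · linarith [h a b]
  · simpa [hd.apply_self] using hg_le b b

lemma LinearMap.exists_apply_eq_sum_mul (ℓ : ((ι → ℝ) × (ι → ℝ) × ℝ) →ₗ[ℝ] ℝ) :
    ∃ (f g : ι → ℝ) (s : ℝ), ∀ x y c,
      ℓ (x, y, c) = ∑ a, x a * f a + ∑ b, y b * g b + c * s := by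
  classical
  set ℓ₁ := ℓ ∘ₗ LinearMap.inl ℝ (ι → ℝ) ((ι → ℝ) × ℝ)
  set ℓ₂ := ℓ ∘ₗ LinearMap.inr ℝ (ι → ℝ) ((ι → ℝ) × ℝ) ∘ₗ LinearMap.inl ℝ (ι → ℝ) ℝ
  refine ⟨fun a => ℓ₁ fun j => if a = j then 1 else 0, fun b => ℓ₂ fun j => if b = j then 1 else 0,
    ℓ (0, 0, 1), fun x y c => ?_⟩
  calc ℓ (x, y, c) = ℓ₁ x + ℓ₂ y + c * ℓ (0, 0, 1) := by
        rw [← smul_eq_mul, ← map_smul]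
        simp only [ℓ₁, ℓ₂, LinearMap.comp_apply, LinearMap.inl_apply, LinearMap.inr_apply,
          ← map_add]
        congr 1
        ext <;> simp
    _ = _ := by simp only [ℓ₁.pi_apply_eq_sum_univ x, ℓ₂.pi_apply_eq_sum_univ y, smul_eq_mul]

def marginalsAndCost (d : ι → ι → ℝ) : (ι × ι → ℝ) →ₗ[ℝ] (ι → ℝ) × (ι → ℝ) × ℝ where
  toFun q := (fun a => ∑ b, q (a, b), fun b => ∑ a, q (a, b), transportCost d q)
  map_add' q r := by ext <;> simp [transportCost, sum_add_distrib, mul_add]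
  map_smul' c q := by ext <;> simp [transportCost, mul_sum, mul_left_comm]

lemma exists_separating_weights {t : ℝ} (h : ∀ q, IsTransportPlan m n q → t < transportCost d q) :
    ∃ (f g : ι → ℝ) (s u : ℝ), ∑ a, m a * f a + ∑ b, n b * g b + t * s < u ∧
      ∀ q ∈ stdSimplex ℝ (ι × ι), u < ∑ p, q p * (f p.1 + g p.2 + s * d p.1 p.2) := by
  have hD : (m, n, t) ∉ marginalsAndCost d '' stdSimplex ℝ (ι × ι) := by
    rintro ⟨q, hq, hLq⟩
    simp only [marginalsAndCost, LinearMap.coe_mk, AddHom.coe_mk, Prod.mk.injEq, funext_iff] at hLq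
    exact (h q ⟨hq.1, hLq.1, hLq.2.1⟩).ne' hLq.2.2
  obtain ⟨ℓ, u, hℓt, hℓD⟩ := geometric_hahn_banach_point_closed
    ((convex_stdSimplex ℝ _).linear_image _)
    ((isCompact_stdSimplex ℝ _).image (marginalsAndCost d).continuous_of_finiteDimensional).isClosed
    hD
  obtain ⟨f, g, s, hℓ⟩ := LinearMap.exists_apply_eq_sum_mul ℓ.toLinearMap
  simp only [ContinuousLinearMap.coe_coe] at hℓ
  refine ⟨f, g, s, u, by rwa [← hℓ], fun q hq => ?_⟩
  rw [← sum_marginals_mul_add_mul_transportCost, mul_comm s, ← hℓ]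
  exact hℓD _ ⟨q, hq, rfl⟩

lemma exists_potentials_of_lt_transportCost (hm : ∀ a, 0 ≤ m a) (hn : ∀ b, 0 ≤ n b)
    (hm1 : ∑ a, m a = 1) (hn1 : ∑ b, n b = 1) {t : ℝ}
    (h : ∀ q, IsTransportPlan m n q → t < transportCost d q) :
    ∃ φ ψ : ι → ℝ, (∀ a b, φ a + ψ b ≤ d a b) ∧ t < ∑ a, m a * φ a + ∑ b, n b * ψ b := by
  classical
  obtain ⟨f, g, s, u, ht, hu⟩ := exists_separating_weights h
  have hprod := isTransportPlan_mul hm hn hm1 hn1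
  -- The product plan is in the simplex and costs more than `t`; separation then forces `s > 0`.
  have hs : 0 < s := by
    have h1 := hu _ (hprod.mem_stdSimplex hm1)
    rw [← sum_marginals_mul_add_mul_transportCost] at h1
    simp only [hprod.2.1, hprod.2.2] at h1
    nlinarith [h _ hprod]
  refine ⟨fun a => (u - f a) / s, fun b => -g b / s, fun a b => ?_, ?_⟩
  · have := hu _ (single_mem_stdSimplex ℝ (a, b))
    simp only [Pi.single_apply, ite_mul, one_mul, zero_mul, sum_ite_eq', mem_univ,
      ↓reduceIte] at this
    rw [← add_div, div_le_iff₀ hs]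
    linarith
  · calc t < (u - (∑ a, m a * f a + ∑ b, n b * g b)) / s := by rw [lt_div_iff₀ hs]; linarith
      _ = _ := by
        simp only [mul_div_assoc', ← sum_div, ← add_div, mul_sub, mul_neg, sum_sub_distrib,
          sum_neg_distrib, ← sum_mul, hm1]
        ring

theorem sInf_transportCost_eq_sSup (hd : IsMetric d) (hm : ∀ a, 0 ≤ m a) (hn : ∀ b, 0 ≤ n b)
    (hm1 : ∑ a, m a = 1) (hn1 : ∑ b, n b = 1) :
    sInf {c | ∃ q, IsTransportPlan m n q ∧ c = transportCost d q} =
      sSup {s | ∃ g : ι → ℝ, (∀ a b, |g a - g b| ≤ d a b) ∧ s = ∑ a, g a * (m a - n a)} := by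
  set P := {c | ∃ q, IsTransportPlan m n q ∧ c = transportCost d q}
  set D := {s | ∃ g : ι → ℝ, (∀ a b, |g a - g b| ≤ d a b) ∧ s = ∑ a, g a * (m a - n a)}
  have hprod := isTransportPlan_mul hm hn hm1 hn1
  have hP : P.Nonempty := ⟨_, _, hprod, rfl⟩
  have hD : D.Nonempty := ⟨_, 0, fun a b => by simpa using hd.nonneg a b, rfl⟩
  have hPbdd : BddBelow P := ⟨0, fun _ ⟨_, hq, hc⟩ => hc ▸ hq.transportCost_nonneg hd.nonneg⟩
  have hDbdd : BddAbove D := ⟨_, fun _ ⟨_, hg, hs⟩ => hs ▸ hprod.sum_mul_sub_le_transportCost hg⟩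
  refine le_antisymm (le_of_forall_lt fun t ht => ?_) (csSup_le hD fun s ⟨g, hg, hs⟩ =>
    le_csInf hP fun c ⟨q, hq, hc⟩ => hs ▸ hc ▸ hq.sum_mul_sub_le_transportCost hg)
  obtain ⟨φ, ψ, hφψ, htφψ⟩ := exists_potentials_of_lt_transportCost hm hn hm1 hn1
    fun q hq => ht.trans_le (csInf_le hPbdd ⟨q, hq, rfl⟩)
  obtain ⟨g, hg, hφg, hgψ⟩ := exists_lipschitz_of_potentials hd hφψ
  refine htφψ.trans_le (le_csSup_of_le hDbdd ⟨g, hg, rfl⟩ ?_)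
  calc ∑ a, m a * φ a + ∑ b, n b * ψ b ≤ ∑ a, m a * g a + ∑ b, n b * -g b :=
        add_le_add (sum_le_sum fun a _ => mul_le_mul_of_nonneg_left (hφg a) (hm a))
          (sum_le_sum fun b _ => mul_le_mul_of_nonneg_left (le_neg_of_le_neg (hgψ b)) (hn b))
    _ = ∑ a, g a * (m a - n a) := (sum_mul_sub_eq_sum_mul_add_sum_mul_neg g).symm

end FiniteTransport

section Supports

variable {μ ν : V → ℝ≥0∞} {Q : V × V → ℝ≥0∞} {F : Finset V}

lemma tsum_eq_sum_coe_of_support_subset {f : V → ℝ≥0∞} (hf : support f ⊆ F) :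
    ∑' x, f x = ∑ x : F, f x := by
  rw [tsum_eq_sum' (L := SummationFilter.unconditional V) hf, sum_coe_sort]

lemma IsPMF.ne_top (hμ : IsPMF μ) (a : V) : μ a ≠ ⊤ :=
  ne_top_of_le_ne_top ENNReal.one_ne_top (hμ ▸ ENNReal.le_tsum a)

lemma IsPMF.sum_toReal_eq_one (hμ : IsPMF μ) (hμF : support μ ⊆ F) :
    ∑ a : F, (μ a).toReal = 1 := by
  rw [← ENNReal.toReal_sum (f := fun a : F => μ a) fun a _ => hμ.ne_top a,
    ← tsum_eq_sum_coe_of_support_subset hμF, hμ, ENNReal.toReal_one]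

lemma IsCoupling.le_left (hQ : IsCoupling μ ν Q) (a b : V) : Q (a, b) ≤ μ a :=
  hQ.1 a ▸ ENNReal.le_tsum b

lemma IsCoupling.le_right (hQ : IsCoupling μ ν Q) (a b : V) : Q (a, b) ≤ ν b :=
  hQ.2 b ▸ ENNReal.le_tsum a

lemma IsCoupling.mem_of_ne_zero (hQ : IsCoupling μ ν Q) (hμF : support μ ⊆ F)
    (hνF : support ν ⊆ F) {p : V × V} (hp : Q p ≠ 0) : p.1 ∈ F ∧ p.2 ∈ F :=
  ⟨hμF fun h => hp (le_zero_iff.1 (h ▸ hQ.le_left p.1 p.2)),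
    hνF fun h => hp (le_zero_iff.1 (h ▸ hQ.le_right p.1 p.2))⟩

lemma tsum_ofReal_mul_eq_ofReal_transportCost {d : V → V → ℝ} (hd : ∀ a b, 0 ≤ d a b)
    (hQF : ∀ p, Q p ≠ 0 → p.1 ∈ F ∧ p.2 ∈ F) (hQ : ∀ p, Q p ≠ ⊤) :
    ∑' p, ENNReal.ofReal (d p.1 p.2) * Q p =
      ENNReal.ofReal (transportCost (fun a b : F => d a b) fun p => (Q (p.1, p.2)).toReal) := by
  have he : Injective (Prod.map ((↑) : F → V) ((↑) : F → V)) :=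
    Subtype.val_injective.prodMap Subtype.val_injective
  rw [← he.tsum_eq, tsum_fintype, transportCost,
    ENNReal.ofReal_sum_of_nonneg fun p _ => mul_nonneg (hd _ _) ENNReal.toReal_nonneg]
  · refine sum_congr rfl fun p _ => ?_
    rw [ENNReal.ofReal_mul (hd _ _), ENNReal.ofReal_toReal (hQ _)]
    rfl
  · intro p hp
    obtain ⟨h1, h2⟩ := hQF p (right_ne_zero_of_mul hp)
    exact ⟨(⟨p.1, h1⟩, ⟨p.2, h2⟩), rfl⟩

lemma IsCoupling.isTransportPlan_toReal (hQ : IsCoupling μ ν Q) (hμ : IsPMF μ)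
    (hμF : support μ ⊆ F) (hνF : support ν ⊆ F) :
    IsTransportPlan (fun a : F => (μ a).toReal) (fun b : F => (ν b).toReal)
      fun p => (Q (p.1, p.2)).toReal := by
  have hQtop : ∀ p, Q p ≠ ⊤ := fun p => ne_top_of_le_ne_top (hμ.ne_top _) (hQ.le_left p.1 p.2)
  refine ⟨fun _ => ENNReal.toReal_nonneg, fun a => ?_, fun b => ?_⟩
  · rw [← ENNReal.toReal_sum fun _ _ => hQtop _, ← tsum_eq_sum_coe_of_support_subset
      (f := fun b => Q (a, b)) fun b hb => (hQ.mem_of_ne_zero hμF hνF hb).2, hQ.1]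
  · rw [← ENNReal.toReal_sum fun _ _ => hQtop _, ← tsum_eq_sum_coe_of_support_subset
      (f := fun a => Q (a, b)) fun a ha => (hQ.mem_of_ne_zero hμF hνF ha).1, hQ.2]

open Classical in
noncomputable def extendPlan (F : Finset V) (q : F × F → ℝ) (p : V × V) : ℝ≥0∞ :=
  if h : p.1 ∈ F ∧ p.2 ∈ F then ENNReal.ofReal (q (⟨p.1, h.1⟩, ⟨p.2, h.2⟩)) else 0

lemma extendPlan_apply_coe (q : F × F → ℝ) (a b : F) :
    extendPlan F q (a, b) = ENNReal.ofReal (q (a, b)) := by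
  rw [extendPlan, dif_pos ⟨a.2, b.2⟩]

lemma mem_of_extendPlan_ne_zero {q : F × F → ℝ} {p : V × V} (hp : extendPlan F q p ≠ 0) :
    p.1 ∈ F ∧ p.2 ∈ F :=
  not_not.1 fun h => hp (by rw [extendPlan, dif_neg h])

lemma IsTransportPlan.isCoupling_extendPlan {q : F × F → ℝ}
    (hq : IsTransportPlan (fun a : F => (μ a).toReal) (fun b : F => (ν b).toReal) q)
    (hμ : IsPMF μ) (hν : IsPMF ν) (hμF : support μ ⊆ F) (hνF : support ν ⊆ F) :
    IsCoupling μ ν (extendPlan F q) := by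
  refine ⟨fun a => ?_, fun b => ?_⟩
  · by_cases ha : a ∈ F
    · lift a to F using ha
      rw [tsum_eq_sum_coe_of_support_subset fun b hb => (mem_of_extendPlan_ne_zero hb).2]
      simp only [extendPlan_apply_coe]
      rw [← ENNReal.ofReal_sum_of_nonneg fun _ _ => hq.1 _, hq.2.1,
        ENNReal.ofReal_toReal (hμ.ne_top _)]
    · rw [show μ a = 0 from not_ne_iff.1 fun h => ha (hμF h)]
      exact ENNReal.tsum_eq_zero.2 fun b => not_ne_iff.1 fun h => ha (mem_of_extendPlan_ne_zero h).1
  · by_cases hb : b ∈ F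
    · lift b to F using hb
      rw [tsum_eq_sum_coe_of_support_subset fun a ha => (mem_of_extendPlan_ne_zero ha).1]
      simp only [extendPlan_apply_coe]
      rw [← ENNReal.ofReal_sum_of_nonneg fun _ _ => hq.1 _, hq.2.2,
        ENNReal.ofReal_toReal (hν.ne_top _)]
    · rw [show ν b = 0 from not_ne_iff.1 fun h => hb (hνF h)]
      exact ENNReal.tsum_eq_zero.2 fun a => not_ne_iff.1 fun h => hb (mem_of_extendPlan_ne_zero h).2

theorem wass_eq_ofReal_sInf_transportCost {d : V → V → ℝ} (hd : IsMetric d) (hμ : IsPMF μ)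
    (hν : IsPMF ν) (hμF : support μ ⊆ F) (hνF : support ν ⊆ F) :
    Wass d μ ν = ENNReal.ofReal (sInf {c | ∃ q, IsTransportPlan (fun a : F => (μ a).toReal)
      (fun b : F => (ν b).toReal) q ∧ c = transportCost (fun a b : F => d a b) q}) := by
  set P := {c | ∃ q, IsTransportPlan (fun a : F => (μ a).toReal)
      (fun b : F => (ν b).toReal) q ∧ c = transportCost (fun a b : F => d a b) q}
  have hP0 : ∀ c ∈ P, 0 ≤ c := fun _ ⟨_, hq, hc⟩ =>
    hc ▸ hq.transportCost_nonneg fun _ _ => hd.nonneg _ _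
  have hle : ∀ c ∈ P, Wass d μ ν ≤ ENNReal.ofReal c := by
    rintro c ⟨q, hq, rfl⟩
    have hcost : ∑' p, ENNReal.ofReal (d p.1 p.2) * extendPlan F q p =
        ENNReal.ofReal (transportCost (fun a b : F => d a b) q) := by
      rw [tsum_ofReal_mul_eq_ofReal_transportCost hd.nonneg
        (fun _ => mem_of_extendPlan_ne_zero) fun p => ?_]
      · simp only [extendPlan_apply_coe, ENNReal.toReal_ofReal (hq.1 _)]
      · unfold extendPlan
        split_ifs <;> simp
    exact iInf_le_of_le ⟨_, hq.isCoupling_extendPlan hμ hν hμF hνF⟩ hcost.le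
  obtain ⟨c, hc⟩ : P.Nonempty := ⟨_, _, isTransportPlan_mul (fun _ => ENNReal.toReal_nonneg)
    (fun _ => ENNReal.toReal_nonneg) (hμ.sum_toReal_eq_one hμF) (hν.sum_toReal_eq_one hνF), rfl⟩
  refine le_antisymm ?_ (le_iInf fun ⟨Q, hQ⟩ => ?_)
  · have hW : Wass d μ ν ≠ ⊤ := ne_top_of_le_ne_top ENNReal.ofReal_ne_top (hle c hc)
    rw [ENNReal.le_ofReal_iff_toReal_le hW (le_csInf ⟨c, hc⟩ hP0)]
    exact le_csInf ⟨c, hc⟩ fun c' hc' => ENNReal.toReal_le_of_le_ofReal (hP0 c' hc') (hle c' hc')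
  · change _ ≤ ∑' p, ENNReal.ofReal (d p.1 p.2) * Q p
    rw [tsum_ofReal_mul_eq_ofReal_transportCost hd.nonneg
      (fun _ => hQ.mem_of_ne_zero hμF hνF) fun p =>
        ne_top_of_le_ne_top (hμ.ne_top _) (hQ.le_left p.1 p.2)]
    exact ENNReal.ofReal_le_ofReal
      (csInf_le ⟨0, hP0⟩ ⟨_, hQ.isTransportPlan_toReal hμ hμF hνF, rfl⟩)

end Supports

lemma setOf_sum_mul_of_lipschitz_eq {d : V → V → ℝ} {Ω : Set V} (hfin : Ω.Finite) (w : V → ℝ) :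
    {s | ∃ g : hfin.toFinset → ℝ, (∀ a b, |g a - g b| ≤ d a b) ∧ s = ∑ a, g a * w a} =
      {s | ∃ g : V → ℝ, (∀ a ∈ Ω, ∀ b ∈ Ω, |g a - g b| ≤ d a b) ∧
        s = ∑ z ∈ hfin.toFinset, g z * w z} := by
  ext s
  constructor
  · rintro ⟨g, hg, rfl⟩
    have hext : ∀ a : hfin.toFinset, extend Subtype.val g 0 a = g a :=
      Subtype.val_injective.extend_apply g 0
    refine ⟨extend Subtype.val g 0, fun a ha b hb => ?_, ?_⟩
    · lift a to hfin.toFinset using hfin.mem_toFinset.2 ha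
      lift b to hfin.toFinset using hfin.mem_toFinset.2 hb
      simpa only [hext] using hg a b
    · rw [← sum_coe_sort hfin.toFinset]
      simp only [hext]
  · rintro ⟨g, hg, rfl⟩
    exact ⟨fun a => g a, fun a b => hg a (hfin.mem_toFinset.1 a.2) b (hfin.mem_toFinset.1 b.2),
      (sum_coe_sort _ _).symm⟩

theorem kantorovich_duality_localized_to_supports_general
    (d : V → V → ℝ) (hd : IsMetric d)
    (μ ν : V → ℝ≥0∞) (hμ : IsPMF μ) (hν : IsPMF ν)
    (Ω : Set V) (hΩ : Ω = {z | μ z ≠ 0} ∪ {z | ν z ≠ 0})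
    (hfin : Ω.Finite) :
    Wass d μ ν = ENNReal.ofReal
      (sSup {s | ∃ g : V → ℝ, (∀ a ∈ Ω, ∀ b ∈ Ω, |g a - g b| ≤ d a b) ∧
        s = ∑ z ∈ hfin.toFinset, g z * ((μ z).toReal - (ν z).toReal)}) := by
  have hμF : support μ ⊆ hfin.toFinset := by
    rw [hfin.coe_toFinset, hΩ]; exact Set.subset_union_left
  have hνF : support ν ⊆ hfin.toFinset := by
    rw [hfin.coe_toFinset, hΩ]; exact Set.subset_union_right
  rw [wass_eq_ofReal_sInf_transportCost hd hμ hν hμF hνF,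
    sInf_transportCost_eq_sSup (hd.comp Subtype.val_injective) (fun _ => ENNReal.toReal_nonneg)
      (fun _ => ENNReal.toReal_nonneg) (hμ.sum_toReal_eq_one hμF) (hν.sum_toReal_eq_one hνF),
    setOf_sum_mul_of_lipschitz_eq hfin fun z => (μ z).toReal - (ν z).toReal]

theorem kantorovich_duality_localized_to_supports
    [Countable V] (d : V → V → ℝ) (hd : IsMetric d)
    (μ ν : V → ℝ≥0∞) (hμ : IsPMF μ) (hν : IsPMF ν)
    (Ω : Set V) (hΩ : Ω = {z | μ z ≠ 0} ∪ {z | ν z ≠ 0})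
    (hfin : Ω.Finite) :
    Wass d μ ν = ENNReal.ofReal
      (sSup {s | ∃ g : V → ℝ, (∀ a ∈ Ω, ∀ b ∈ Ω, |g a - g b| ≤ d a b) ∧
        s = ∑ z ∈ hfin.toFinset, g z * ((μ z).toReal - (ν z).toReal)}) :=
  kantorovich_duality_localized_to_supports_general d hd μ ν hμ hν Ω hΩ hfin
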